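/- arXiv:1703.09280 — 5 statements merged into one kernel-verified Lean document; each statement's English description precedes it below -/
import Mathlib

section
/- For any level f̂ < 0 whose level set X̂ = { x | f(x) = f̂ } is nonempty, and any k ≥ 0, if the Radial Subgradient Method with positive step sizes {α_i} satisfies γ_{z_i}(x̃_{i+1}) > 0 for all i ≤ k (so the first k+1 iterations are well-defined), then some iteration i ≤ k satisfies (f(x_i) − f̂)/(0 − f(x_i)) ≤ [dist(0, X̂)² + (1/R²)·∑_{j=0}^{k} α_j²·(f̂/z_j)²] / [2·∑_{j=0}^{k} α_j·(f̂/z_j)], where dist(0, X̂) is the infimum of ‖x‖ over x ∈ X̂. -/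
/-!
Rescaling the iterates to the target level, `u i = (f̂ / z i) • x i`, turns the method into the
ordinary subgradient method `u (i+1) = u i - α i (f̂ / z i) ζ i` started at `0`. Every iterate has
radial value `γ_{z i}(x i) = 1`, and each `x̂ ∈ X̂` rescaled to `(z i / f̂) • x̂` has radial value
at most `z i / f̂`, so the subgradient inequality gives `⟪ζ i, u i - x̂⟫ ≥ f̂ / z i - 1`.
Subgradients of `γ_z` have norm at most `1 / R`: `f ≤ 0` on the closed ball of radius `R` and the
perspective is subadditive, so `γ_z(x + d) ≤ γ_z(x) + ‖d‖ / R`. The usual telescoping of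
`‖u i - x̂‖²` then bounds a weighted average of `f̂ / z i - 1`, and since `f (x i) ≤ z i < 0`,
`(f (x i) - f̂) / (0 - f (x i)) = f̂ / f (x i) - 1 ≤ f̂ / z i - 1`.
-/

open Filter

/-- The perspective function `f^p(x, γ) = γ · f(x/γ)` of `f`, for `γ > 0`. -/
noncomputable def perspective {n : ℕ} (f : EuclideanSpace ℝ (Fin n) → EReal)
    (x : EuclideanSpace ℝ (Fin n)) (γ : ℝ) : EReal :=
  (γ : EReal) * f (γ⁻¹ • x)

/-- The radial reformulation of `f` of level `z`:
`γ_z(x) = inf { γ > 0 | f^p(x, γ) ≤ z }`. -/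
noncomputable def radial {n : ℕ} (f : EuclideanSpace ℝ (Fin n) → EReal)
    (z : ℝ) (x : EuclideanSpace ℝ (Fin n)) : ℝ :=
  sInf {γ : ℝ | 0 < γ ∧ perspective f x γ ≤ (z : EReal)}

/-- `f : ℝⁿ → ℝ ∪ {∞}` is lower-semicontinuous and convex, never `-∞`, with
`0` in the interior of its effective domain and `f(0) < 0`. -/
structure GoodFun {n : ℕ} (f : EuclideanSpace ℝ (Fin n) → EReal) : Prop where
  proper : ∀ x, f x ≠ ⊥
  lsc : LowerSemicontinuous f
  convexEpi : Convex ℝ {p : EuclideanSpace ℝ (Fin n) × ℝ | f p.1 ≤ (p.2 : EReal)}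
  zero_mem : (0 : EuclideanSpace ℝ (Fin n)) ∈ interior {x | f x ≠ ⊤}
  neg_at_zero : f 0 < 0

/-- `ζ` is a subgradient of `g` at `x`. -/
def IsSubgradient {n : ℕ} (g : EuclideanSpace ℝ (Fin n) → ℝ)
    (x ζ : EuclideanSpace ℝ (Fin n)) : Prop :=
  ∀ y, g x + (inner ℝ ζ (y - x) : ℝ) ≤ g y

/-- The Radial Subgradient Method with positive step sizes `α`:
`x 0 = 0`, `z 0 = f 0`; at iteration `i`, `ζ i` is a subgradient of `γ_{z i}` at `x i`,
`xt (i+1) = x i - α i • ζ i`, and whenever `γ_{z i}(xt (i+1)) > 0`,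
`(x (i+1), z (i+1)) = (xt (i+1), z i) / γ_{z i}(xt (i+1))`. -/
structure RSM {n : ℕ} (f : EuclideanSpace ℝ (Fin n) → EReal) (α : ℕ → ℝ)
    (x xt : ℕ → EuclideanSpace ℝ (Fin n)) (z : ℕ → ℝ)
    (ζ : ℕ → EuclideanSpace ℝ (Fin n)) : Prop where
  step_pos : ∀ i, 0 < α i
  init_x : x 0 = 0
  init_z : f 0 = ((z 0 : ℝ) : EReal)
  subgrad : ∀ i, IsSubgradient (radial f (z i)) (x i) (ζ i)
  tilde : ∀ i, xt (i + 1) = x i - α i • ζ i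
  update_x : ∀ i, 0 < radial f (z i) (xt (i + 1)) →
    x (i + 1) = (radial f (z i) (xt (i + 1)))⁻¹ • xt (i + 1)
  update_z : ∀ i, 0 < radial f (z i) (xt (i + 1)) →
    z (i + 1) = z i / radial f (z i) (xt (i + 1))

open Finset Metric Topology

theorem norm_sub_sq_add_two_mul_sum_le {E : Type*} [NormedAddCommGroup E]
    [InnerProductSpace ℝ E] {u g : ℕ → E} {β G : ℕ → ℝ} (y : E) {m : ℕ}
    (hu : ∀ i < m, u (i + 1) = u i - β i • g i) (hβ : ∀ i < m, 0 ≤ β i)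
    (hG : ∀ i < m, G i ≤ inner ℝ (g i) (u i - y)) :
    ‖u m - y‖ ^ 2 + 2 * ∑ i ∈ range m, β i * G i ≤
      ‖u 0 - y‖ ^ 2 + ∑ i ∈ range m, β i ^ 2 * ‖g i‖ ^ 2 := by
  induction m with
  | zero => simp
  | succ m ih =>
    have hstep : ‖u (m + 1) - y‖ ^ 2 =
        ‖u m - y‖ ^ 2 - 2 * β m * inner ℝ (g m) (u m - y) + β m ^ 2 * ‖g m‖ ^ 2 := by
      rw [hu m m.lt_succ_self, sub_right_comm, norm_sub_sq_real, real_inner_smul_right,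
        norm_smul, real_inner_comm, mul_pow, Real.norm_eq_abs, sq_abs]
      ring
    have hGm : β m * G m ≤ β m * inner ℝ (g m) (u m - y) :=
      mul_le_mul_of_nonneg_left (hG m m.lt_succ_self) (hβ m m.lt_succ_self)
    have := ih (fun i hi => hu i (by omega)) (fun i hi => hβ i (by omega))
      (fun i hi => hG i (by omega))
    rw [sum_range_succ, sum_range_succ]
    linarith

theorem sub_div_zero_sub_le {v z w : ℝ} (hvz : v ≤ z) (hz : z < 0) (hw : w ≤ 0) :
    (v - w) / (0 - v) ≤ w / z - 1 := by
  calc (v - w) / (0 - v) = w / v - 1 := by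
        rw [zero_sub, div_neg, sub_div, div_self (hvz.trans_lt hz).ne, neg_sub]
    _ ≤ w / z - 1 := by
        simpa only [mul_one_div, sub_le_sub_iff_right] using
          mul_le_mul_of_nonpos_left (one_div_le_one_div_of_neg_of_le hz hvz) hw

theorem Finset.exists_le_div_sum_of_sum_mul_le {ι : Type*} {s : Finset ι} (hs : s.Nonempty)
    {β G : ι → ℝ} (hβ : ∀ i ∈ s, 0 < β i) {C : ℝ} (h : ∑ i ∈ s, β i * G i ≤ C) :
    ∃ i ∈ s, G i ≤ C / ∑ i ∈ s, β i := by
  have hsum : 0 < ∑ i ∈ s, β i := sum_pos hβ hs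
  have hC : ∑ i ∈ s, β i * G i ≤ ∑ i ∈ s, β i * (C / ∑ i ∈ s, β i) := by
    rwa [← sum_mul, mul_div_cancel₀ _ hsum.ne']
  obtain ⟨i, hi, hle⟩ := exists_le_of_sum_le hs hC
  exact ⟨i, hi, le_of_mul_le_mul_left hle (hβ i hi)⟩

theorem Metric.le_infDist_sq {X : Type*} [PseudoMetricSpace X] {x : X} {s : Set X}
    (hs : s.Nonempty) {c : ℝ} (h : ∀ y ∈ s, c ≤ dist x y ^ 2) : c ≤ infDist x s ^ 2 := by
  rcases le_or_gt c 0 with hc | hc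
  · exact hc.trans (sq_nonneg _)
  have hsqrt : √c ≤ infDist x s := (le_infDist hs).2 fun y hy =>
    (Real.sqrt_le_sqrt (h y hy)).trans_eq (Real.sqrt_sq dist_nonneg)
  calc c = √c ^ 2 := (Real.sq_sqrt hc.le).symm
    _ ≤ infDist x s ^ 2 := pow_le_pow_left₀ (Real.sqrt_nonneg c) hsqrt 2

theorem convexOn_toReal_of_convex_epigraph {E : Type*} [AddCommGroup E] [Module ℝ E]
    {f : E → EReal} (hbot : ∀ x, f x ≠ ⊥)
    (hconv : Convex ℝ {p : E × ℝ | f p.1 ≤ p.2}) :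
    ConvexOn ℝ {x | f x ≠ ⊤} (fun x => (f x).toReal) := by
  have hcomb : ∀ p ∈ {x | f x ≠ ⊤}, ∀ q ∈ {x | f x ≠ ⊤}, ∀ a b : ℝ, 0 ≤ a → 0 ≤ b →
      a + b = 1 → f (a • p + b • q) ≤ ((a * (f p).toReal + b * (f q).toReal : ℝ) : EReal) := by
    intro p hp q hq a b ha hb hab
    have hmem := hconv (x := (p, (f p).toReal)) (y := (q, (f q).toReal))
      (EReal.coe_toReal hp (hbot p)).ge (EReal.coe_toReal hq (hbot q)).ge ha hb hab
    simpa only [Prod.smul_mk, Prod.mk_add_mk, smul_eq_mul, Set.mem_ofPred_eq] using hmem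
  refine ⟨fun p hp q hq a b ha hb hab => ?_, fun p hp q hq a b ha hb hab => ?_⟩
  · exact ne_top_of_le_ne_top (EReal.coe_ne_top _) (hcomb p hp q hq a b ha hb hab)
  · exact (EReal.toReal_le_toReal (hcomb p hp q hq a b ha hb hab) (hbot _)
      (EReal.coe_ne_top _)).trans_eq (EReal.toReal_coe _)

section Radial

variable {n : ℕ} {f : EuclideanSpace ℝ (Fin n) → EReal} {x y d : EuclideanSpace ℝ (Fin n)}
  {z w γ μ c : ℝ}

theorem perspective_le_iff (hγ : 0 < γ) :
    perspective f x γ ≤ z ↔ f (γ⁻¹ • x) ≤ ((z / γ : ℝ) : EReal) := by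
  rw [perspective, mul_comm, EReal.coe_div,
    EReal.le_div_iff_mul_le (EReal.coe_pos.2 hγ) (EReal.coe_ne_top γ)]

theorem radial_le (hγ : 0 < γ) (h : perspective f x γ ≤ z) : radial f z x ≤ γ :=
  csInf_le ⟨0, fun _ hγ => hγ.1.le⟩ ⟨hγ, h⟩

theorem nonempty_of_radial_pos (h : 0 < radial f z x) :
    {γ : ℝ | 0 < γ ∧ perspective f x γ ≤ z}.Nonempty := by
  by_contra hempty
  rw [Set.not_nonempty_iff_eq_empty] at hempty
  rw [radial, hempty, Real.sInf_empty] at h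
  exact h.false

theorem radial_zero (hf : f 0 = z) (hz : z < 0) : radial f z 0 = 1 := by
  have hset : {γ : ℝ | 0 < γ ∧ perspective f 0 γ ≤ z} = Set.Ici 1 := by
    ext γ
    simp only [Set.mem_ofPred_eq, Set.mem_Ici, perspective, smul_zero, hf, ← EReal.coe_mul,
      EReal.coe_le_coe_iff]
    constructor
    · rintro ⟨hγ, hle⟩
      nlinarith
    · intro hγ
      exact ⟨by linarith, by nlinarith⟩
  rw [radial, hset, csInf_Ici]

open Pointwise in
theorem radial_div_inv_smul (hc : 0 < c) :
    radial f (z / c) (c⁻¹ • x) = c⁻¹ * radial f z x := by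
  have hset : {γ : ℝ | 0 < γ ∧ perspective f (c⁻¹ • x) γ ≤ ((z / c : ℝ) : EReal)} =
      c⁻¹ • {γ : ℝ | 0 < γ ∧ perspective f x γ ≤ z} := by
    ext γ
    rw [Set.mem_smul_set_iff_inv_smul_mem₀ (inv_ne_zero hc.ne'), inv_inv, smul_eq_mul]
    simp only [Set.mem_ofPred_eq, mul_pos_iff_of_pos_left hc]
    refine and_congr_right fun hγ => ?_
    rw [perspective_le_iff hγ, perspective_le_iff (mul_pos hc hγ), smul_smul, mul_inv,
      div_div, mul_comm γ⁻¹]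
  rw [radial, radial, hset, Real.sInf_smul_of_nonneg (inv_nonneg.2 hc.le), smul_eq_mul]

theorem radial_smul_le (hc : 0 < c) (hy : f y ≤ w) : radial f (c * w) (c • y) ≤ c := by
  refine radial_le hc ?_
  rwa [perspective_le_iff hc, inv_smul_smul₀ hc.ne', mul_div_cancel_left₀ _ hc.ne']

theorem apply_inv_radial_smul_le (hlsc : LowerSemicontinuous f) (hg : 0 < radial f z x) :
    f ((radial f z x)⁻¹ • x) ≤ ((z / radial f z x : ℝ) : EReal) := by
  obtain ⟨γ, -, hγlim, hγmem⟩ :=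
    exists_seq_tendsto_sInf (nonempty_of_radial_pos hg) ⟨0, fun _ hγ => hγ.1.le⟩
  have hepi : IsClosed {p : EuclideanSpace ℝ (Fin n) × ℝ | f p.1 ≤ p.2} :=
    hlsc.isClosed_epigraph.preimage
      (continuous_fst.prodMk (continuous_coe_real_ereal.comp continuous_snd))
  have hlim : Tendsto (fun i => ((γ i)⁻¹ • x, z / γ i)) atTop
      (𝓝 ((radial f z x)⁻¹ • x, z / radial f z x)) :=
    ((hγlim.inv₀ hg.ne').smul_const x).prodMk_nhds (tendsto_const_nhds.div hγlim hg.ne')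
  exact hepi.mem_of_tendsto hlim
    (Eventually.of_forall fun i => (perspective_le_iff (hγmem i).1).1 (hγmem i).2)

theorem perspective_add_le
    (hconv : Convex ℝ {p : EuclideanSpace ℝ (Fin n) × ℝ | f p.1 ≤ p.2})
    (hγ : 0 < γ) (hμ : 0 < μ) (hx : perspective f x γ ≤ z) (hd : perspective f d μ ≤ w) :
    perspective f (x + d) (γ + μ) ≤ ((z + w : ℝ) : EReal) := by
  rw [perspective_le_iff hγ] at hx
  rw [perspective_le_iff hμ] at hd
  have hγμ : 0 < γ + μ := add_pos hγ hμ
  have hmem := hconv (x := (γ⁻¹ • x, z / γ)) (y := (μ⁻¹ • d, w / μ)) hx hd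
    (div_nonneg hγ.le hγμ.le) (div_nonneg hμ.le hγμ.le) (by field_simp)
  simp only [Prod.smul_mk, Prod.mk_add_mk, smul_eq_mul, Set.mem_ofPred_eq, smul_smul] at hmem
  rw [perspective_le_iff hγμ, smul_add]
  convert hmem using 3 <;> field_simp

theorem radial_add_le (hconv : Convex ℝ {p : EuclideanSpace ℝ (Fin n) × ℝ | f p.1 ≤ p.2})
    {R : ℝ} (hR : 0 < R) (hball : ∀ v, ‖v‖ ≤ R → f v ≤ 0)
    (hne : {γ : ℝ | 0 < γ ∧ perspective f x γ ≤ z}.Nonempty) :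
    radial f z (x + d) ≤ radial f z x + ‖d‖ / R := by
  rcases eq_or_ne d 0 with rfl | hd0
  · simp
  set μ := ‖d‖ / R
  have hμ : 0 < μ := div_pos (norm_pos_iff.2 hd0) hR
  have hd : perspective f d μ ≤ ((0 : ℝ) : EReal) := by
    rw [perspective_le_iff hμ, zero_div]
    refine hball _ (le_of_eq ?_)
    rw [norm_smul, Real.norm_eq_abs, abs_inv, abs_of_pos hμ, inv_mul_eq_iff_eq_mul₀ hμ.ne']
    exact (div_mul_cancel₀ _ hR.ne').symm
  suffices radial f z (x + d) - μ ≤ radial f z x by linarith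
  refine le_csInf hne fun γ ⟨hγ, hx⟩ => ?_
  have := radial_le (add_pos hγ hμ) (add_zero z ▸ perspective_add_le hconv hγ hμ hx hd)
  linarith

theorem IsSubgradient.norm_le
    (hconv : Convex ℝ {p : EuclideanSpace ℝ (Fin n) × ℝ | f p.1 ≤ p.2})
    {R : ℝ} (hR : 0 < R) (hball : ∀ v, ‖v‖ ≤ R → f v ≤ 0) {ζ : EuclideanSpace ℝ (Fin n)}
    (hsub : IsSubgradient (radial f z) x ζ)
    (hne : {γ : ℝ | 0 < γ ∧ perspective f x γ ≤ z}.Nonempty) :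
    ‖ζ‖ ≤ 1 / R := by
  have h := (hsub (x + ζ)).trans (radial_add_le hconv hR hball hne)
  rw [add_sub_cancel_left, real_inner_self_eq_norm_sq] at h
  have hsq : ‖ζ‖ * ‖ζ‖ ≤ ‖ζ‖ * (1 / R) := by linarith [mul_one_div ‖ζ‖ R]
  rcases (norm_nonneg ζ).eq_or_lt with h0 | h0
  · rw [← h0]; positivity
  · exact le_of_mul_le_mul_left hsq h0

theorem IsSubgradient.div_sub_one_le_inner {ζ : EuclideanSpace ℝ (Fin n)}
    (hsub : IsSubgradient (radial f z) x ζ) (hx : radial f z x = 1) (hz : z < 0) (hw : w < 0)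
    (hy : f y ≤ w) : w / z - 1 ≤ inner ℝ ζ ((w / z) • x - y) := by
  have hc : 0 < z / w := div_pos_of_neg_of_neg hz hw
  have hrad : radial f z ((z / w) • y) ≤ z / w := by
    simpa only [div_mul_cancel₀ z hw.ne] using radial_smul_le (w := w) hc hy
  have h := (hsub ((z / w) • y)).trans hrad
  rw [hx] at h
  have hscale : (w / z) • x - y = (w / z) • (x - (z / w) • y) := by
    rw [smul_sub, smul_smul, div_mul_div_cancel₀ hz.ne, div_self hw.ne, one_smul]
  have hflip : inner ℝ ζ (x - (z / w) • y) = -inner ℝ ζ ((z / w) • y - x) := by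
    rw [← inner_neg_right, neg_sub]
  rw [hscale, real_inner_smul_right, hflip]
  calc w / z - 1 = w / z * (1 - z / w) := by
        rw [mul_sub, mul_one, div_mul_div_cancel₀ hz.ne, div_self hw.ne]
    _ ≤ w / z * -inner ℝ ζ ((z / w) • y - x) :=
        mul_le_mul_of_nonneg_left (by linarith) (div_pos_of_neg_of_neg hw hz).le

end Radial

namespace GoodFun

variable {n : ℕ} {f : EuclideanSpace ℝ (Fin n) → EReal} {R : ℝ}

theorem eventually_lt_zero (hf : GoodFun f) : ∀ᶠ v in 𝓝 0, f v < 0 := by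
  have hdom : interior {v | f v ≠ ⊤} ∈ 𝓝 (0 : EuclideanSpace ℝ (Fin n)) :=
    isOpen_interior.mem_nhds hf.zero_mem
  have hcont : ContinuousAt (fun v => (f v).toReal) 0 :=
    ((convexOn_toReal_of_convex_epigraph hf.proper hf.convexEpi).continuousOn_interior 0
      hf.zero_mem).continuousAt hdom
  filter_upwards [hcont.eventually (gt_mem_nhds (EReal.toReal_neg hf.neg_at_zero (hf.proper 0))),
    hdom] with v hv hv'
  rw [← EReal.coe_toReal (interior_subset hv') (hf.proper v)]
  exact_mod_cast hv

theorem pos_of_isLUB (hf : GoodFun f) (hR : IsLUB {r : ℝ | ∀ v, ‖v‖ ≤ r → f v ≤ 0} R) :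
    0 < R := by
  obtain ⟨ε, hε, hball⟩ := Metric.eventually_nhds_iff_ball.1 hf.eventually_lt_zero
  have hmem : ε / 2 ∈ {r : ℝ | ∀ v, ‖v‖ ≤ r → f v ≤ 0} := fun v hv =>
    (hball v (mem_ball_zero_iff.2 (by linarith))).le
  linarith [hR.1 hmem]

theorem apply_nonpos_of_norm_le (hf : GoodFun f)
    (hR : IsLUB {r : ℝ | ∀ v, ‖v‖ ≤ r → f v ≤ 0} R) {v : EuclideanSpace ℝ (Fin n)}
    (hv : ‖v‖ ≤ R) : f v ≤ 0 := by
  have hball : ball 0 R ⊆ f ⁻¹' Set.Iic 0 := fun u hu => by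
    obtain ⟨r, hr, hur, -⟩ := hR.exists_between (mem_ball_zero_iff.1 hu)
    exact hr u hur.le
  have hclosed := closure_minimal hball (hf.lsc.isClosed_preimage 0)
  rw [closure_ball 0 (hf.pos_of_isLUB hR).ne'] at hclosed
  exact hclosed (mem_closedBall_zero_iff.2 hv)

end GoodFun

namespace RSM

variable {n : ℕ} {f : EuclideanSpace ℝ (Fin n) → EReal} {α : ℕ → ℝ}
  {x xt : ℕ → EuclideanSpace ℝ (Fin n)} {z : ℕ → ℝ} {ζ : ℕ → EuclideanSpace ℝ (Fin n)}

theorem level_neg (hrsm : RSM f α x xt z ζ) (h0 : f 0 < 0) {i : ℕ}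
    (hi : ∀ j < i, 0 < radial f (z j) (xt (j + 1))) : z i < 0 := by
  induction i with
  | zero => exact_mod_cast hrsm.init_z ▸ h0
  | succ m ih =>
    rw [hrsm.update_z m (hi m m.lt_succ_self)]
    exact div_neg_of_neg_of_pos (ih fun j hj => hi j (by omega)) (hi m m.lt_succ_self)

theorem radial_eq_one (hrsm : RSM f α x xt z ζ) (h0 : f 0 < 0) {i : ℕ}
    (hi : ∀ j < i, 0 < radial f (z j) (xt (j + 1))) : radial f (z i) (x i) = 1 := by
  cases i with
  | zero => rw [hrsm.init_x]; exact radial_zero hrsm.init_z (hrsm.level_neg h0 hi)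
  | succ m =>
    have hm := hi m m.lt_succ_self
    rw [hrsm.update_x m hm, hrsm.update_z m hm, radial_div_inv_smul hm, inv_mul_cancel₀ hm.ne']

theorem apply_le_level (hrsm : RSM f α x xt z ζ) (hlsc : LowerSemicontinuous f) {i : ℕ}
    (hi : ∀ j < i, 0 < radial f (z j) (xt (j + 1))) : f (x i) ≤ z i := by
  cases i with
  | zero => rw [hrsm.init_x, hrsm.init_z]
  | succ m =>
    have hm := hi m m.lt_succ_self
    rw [hrsm.update_x m hm, hrsm.update_z m hm]
    exact apply_inv_radial_smul_le hlsc hm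

theorem div_smul_succ (hrsm : RSM f α x xt z ζ) {i : ℕ}
    (hi : 0 < radial f (z i) (xt (i + 1))) (c : ℝ) :
    (c / z (i + 1)) • x (i + 1) = (c / z i) • x i - (α i * (c / z i)) • ζ i := by
  rw [hrsm.update_x i hi, hrsm.update_z i hi, smul_smul, div_div_eq_mul_div, mul_div_right_comm,
    mul_assoc, mul_inv_cancel₀ hi.ne', mul_one, hrsm.tilde i, smul_sub, smul_smul, mul_comm]

theorem two_mul_sum_le_norm_sq_add (hrsm : RSM f α x xt z ζ) (hf : GoodFun f) {R : ℝ}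
    (hR : IsLUB {r : ℝ | ∀ v, ‖v‖ ≤ r → f v ≤ 0} R) {w : ℝ} (hw : w < 0)
    {y : EuclideanSpace ℝ (Fin n)} (hy : f y ≤ w) {k : ℕ}
    (hk : ∀ i ≤ k, 0 < radial f (z i) (xt (i + 1))) :
    2 * ∑ j ∈ range (k + 1), α j * (w / z j) * (w / z j - 1) ≤
      ‖y‖ ^ 2 + 1 / R ^ 2 * ∑ j ∈ range (k + 1), α j ^ 2 * (w / z j) ^ 2 := by
  have hR0 := hf.pos_of_isLUB hR
  have hprefix : ∀ i < k + 1, ∀ j < i, 0 < radial f (z j) (xt (j + 1)) :=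
    fun i hi j hj => hk j (by omega)
  have hz : ∀ i < k + 1, z i < 0 := fun i hi => hrsm.level_neg hf.neg_at_zero (hprefix i hi)
  have hone : ∀ i < k + 1, radial f (z i) (x i) = 1 :=
    fun i hi => hrsm.radial_eq_one hf.neg_at_zero (hprefix i hi)
  have hdescent := norm_sub_sq_add_two_mul_sum_le (u := fun j => (w / z j) • x j) (g := ζ)
    (β := fun j => α j * (w / z j)) (G := fun j => w / z j - 1) y (m := k + 1)
    (fun i hi => hrsm.div_smul_succ (hk i (by omega)) w)
    (fun i hi => (mul_pos (hrsm.step_pos i) (div_pos_of_neg_of_neg hw (hz i hi))).le)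
    (fun i hi => (hrsm.subgrad i).div_sub_one_le_inner (hone i hi) (hz i hi) hw hy)
  have hζ : ∀ j ∈ range (k + 1), (α j * (w / z j)) ^ 2 * ‖ζ j‖ ^ 2 ≤
      1 / R ^ 2 * (α j ^ 2 * (w / z j) ^ 2) := fun j hj => by
    have hnorm := (hrsm.subgrad j).norm_le hf.convexEpi hR0
      (fun v hv => hf.apply_nonpos_of_norm_le hR hv)
      (nonempty_of_radial_pos ((hone j (mem_range.1 hj)).symm ▸ one_pos))
    calc (α j * (w / z j)) ^ 2 * ‖ζ j‖ ^ 2 ≤ (α j * (w / z j)) ^ 2 * (1 / R) ^ 2 := by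
          gcongr
      _ = 1 / R ^ 2 * (α j ^ 2 * (w / z j) ^ 2) := by ring
  simp only [hrsm.init_x, smul_zero, zero_sub, norm_neg] at hdescent
  have hsum := sum_le_sum hζ
  rw [← mul_sum] at hsum
  linarith [sq_nonneg ‖(w / z (k + 1)) • x (k + 1) - y‖]

end RSM

/-- **Theorem 1.1 (general convergence guarantee).** For any level `f̂ < 0` with nonempty
level set `X̂ = {x | f x = f̂}` and any `k ≥ 0`, if the first `k+1` iterations of the Radial
Subgradient Method are well-defined, then some iteration `i ≤ k` has
`(f(xᵢ) - f̂)/(0 - f(xᵢ)) ≤ (dist(0,X̂)² + (1/R²) ∑ αⱼ² (f̂/zⱼ)²) / (2 ∑ αⱼ (f̂/zⱼ))`. -/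
theorem radial_subgradient_general_convergence {n : ℕ}
    (f : EuclideanSpace ℝ (Fin n) → EReal) (hf : GoodFun f)
    (R : ℝ) (hR : IsLUB {r : ℝ | ∀ x, ‖x‖ ≤ r → f x ≤ 0} R)
    (α : ℕ → ℝ) (x xt : ℕ → EuclideanSpace ℝ (Fin n)) (z : ℕ → ℝ)
    (ζ : ℕ → EuclideanSpace ℝ (Fin n)) (hrsm : RSM f α x xt z ζ)
    (fhat : ℝ) (hfhat : fhat < 0)
    (hXhat : {y : EuclideanSpace ℝ (Fin n) | f y = ((fhat : ℝ) : EReal)}.Nonempty)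
    (k : ℕ) (hpos : ∀ i ≤ k, 0 < radial f (z i) (xt (i + 1))) :
    ∃ i ≤ k, ∃ v : ℝ, f (x i) = ((v : ℝ) : EReal) ∧
      (v - fhat) / (0 - v) ≤
        (Metric.infDist (0 : EuclideanSpace ℝ (Fin n))
            {y | f y = ((fhat : ℝ) : EReal)} ^ 2
          + (1 / R ^ 2) * ∑ j ∈ Finset.range (k + 1), α j ^ 2 * (fhat / z j) ^ 2)
        / (2 * ∑ j ∈ Finset.range (k + 1), α j * (fhat / z j)) := by
  set X := {y : EuclideanSpace ℝ (Fin n) | f y = ((fhat : ℝ) : EReal)}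
  set T := 1 / R ^ 2 * ∑ j ∈ range (k + 1), α j ^ 2 * (fhat / z j) ^ 2
  have hprefix : ∀ i ≤ k, ∀ j < i, 0 < radial f (z j) (xt (j + 1)) :=
    fun i hi j hj => hpos j (by omega)
  have hz : ∀ i ≤ k, z i < 0 := fun i hi => hrsm.level_neg hf.neg_at_zero (hprefix i hi)
  have hdist : 2 * ∑ j ∈ range (k + 1), α j * (fhat / z j) * (fhat / z j - 1) - T ≤
      infDist 0 X ^ 2 := le_infDist_sq hXhat fun y hy => by
    rw [dist_zero_left]
    linarith [hrsm.two_mul_sum_le_norm_sq_add hf hR hfhat hy.le hpos]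
  obtain ⟨i, hi, hGi⟩ := exists_le_div_sum_of_sum_mul_le (G := fun j => fhat / z j - 1)
    (C := (infDist 0 X ^ 2 + T) / 2) nonempty_range_add_one
    (fun j hj => mul_pos (hrsm.step_pos j)
      (div_pos_of_neg_of_neg hfhat (hz j (Nat.lt_succ_iff.1 (mem_range.1 hj))))) (by linarith)
  rw [mem_range, Nat.lt_succ_iff] at hi
  have hle := hrsm.apply_le_level hf.lsc (hprefix i hi)
  obtain ⟨v, hv⟩ : ∃ v : ℝ, f (x i) = v :=
    ⟨_, (EReal.coe_toReal (ne_top_of_le_ne_top (EReal.coe_ne_top _) hle) (hf.proper _)).symm⟩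
  refine ⟨i, hi, v, hv, ?_⟩
  have hvz : v ≤ z i := by rw [hv] at hle; exact_mod_cast hle
  exact (sub_div_zero_sub_le hvz (hz i hi) hfhat.le).trans (by rwa [div_div] at hGi)
end

section
/- For any z < 0, the infimum of the radial reformulation γ_z over ℝⁿ equals z/f*, with the convention that z/f* = 0 when f* = −∞. -/
open Filter

/-!
An admissible `γ` for `γ_z(x)` satisfies `γ · f* ≤ γ f(x/γ) ≤ z`, hence `γ ≥ z / f*` as `z < 0`.
Admissible `γ` exist: once `x/γ₀` lies in the domain of `f`, convexity between `x/γ₀` and `0`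
makes `γ ↦ γ f(x/γ)` decrease at least with slope `f 0 < 0` for `γ ≥ γ₀`. Conversely a
point `y` with `f y = r < 0` is admissible at `γ = z / r` after scaling to `(z / r) • y`, so a
positive lower bound `b` of `γ_z` forces `z / b ≤ f y`. Thus the positive lower bounds of `γ_z`
are exactly the `b` with `z / b ≤ f*`. In `EReal`, `z / ⊥ = 0`, which is the convention for
`f* = -∞`.
-/

open Set

section Radial

variable {n : ℕ} {f : EuclideanSpace ℝ (Fin n) → EReal}

lemma perspective_smul_self (y : EuclideanSpace ℝ (Fin n)) {γ : ℝ} (hγ : 0 < γ) :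
    perspective f (γ • y) γ = γ * f y := by
  rw [perspective, smul_smul, inv_mul_cancel₀ hγ.ne', one_smul]

lemma perspective_smul_le_of_convex
    (hconv : Convex ℝ {p : EuclideanSpace ℝ (Fin n) × ℝ | f p.1 ≤ (p.2 : EReal)})
    {a : EuclideanSpace ℝ (Fin n)} {A B : ℝ} (ha : f a ≤ A) (h0 : f 0 ≤ B)
    {γ₀ γ : ℝ} (hγ₀ : 0 < γ₀) (hγ : γ₀ ≤ γ) :
    perspective f (γ₀ • a) γ ≤ ((γ₀ * A + (γ - γ₀) * B : ℝ) : EReal) := by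
  have hγpos : 0 < γ := hγ₀.trans_le hγ
  set t := γ₀ / γ
  have ht : t ≤ 1 := (div_le_one hγpos).mpr hγ
  have hchord := hconv (x := (a, A)) (y := (0, B)) ha h0 (a := t) (b := 1 - t)
    (by positivity) (by linarith) (by ring)
  simp only [Prod.smul_mk, Prod.mk_add_mk, smul_eq_mul, smul_zero, add_zero] at hchord
  have hpoint : γ⁻¹ • γ₀ • a = t • a := by rw [smul_smul, inv_mul_eq_div]
  calc perspective f (γ₀ • a) γ = γ * f (t • a) := by rw [perspective, hpoint]
    _ ≤ γ * ((t * A + (1 - t) * B : ℝ) : EReal) :=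
      mul_le_mul_of_nonneg_left hchord (EReal.coe_nonneg.mpr hγpos.le)
    _ = ((γ₀ * A + (γ - γ₀) * B : ℝ) : EReal) := by
      rw [← EReal.coe_mul]
      congr 1
      linear_combination (A - B) * (mul_div_cancel₀ γ₀ hγpos.ne' : γ * t = γ₀)

lemma GoodFun.exists_perspective_le (hf : GoodFun f) (z : ℝ) (x : EuclideanSpace ℝ (Fin n)) :
    ∃ γ, 0 < γ ∧ perspective f x γ ≤ (z : EReal) := by
  have hshrink : Tendsto (fun γ : ℝ => γ⁻¹ • x) atTop (nhds 0) := by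
    simpa only [zero_smul] using (tendsto_inv_atTop_zero (𝕜 := ℝ)).smul_const x
  obtain ⟨γ₀, hγ₀, hdom⟩ := ((eventually_gt_atTop 0).and
    (hshrink.eventually (mem_interior_iff_mem_nhds.mp hf.zero_mem))).exists
  set a := γ₀⁻¹ • x
  have hx : x = γ₀ • a := by rw [smul_inv_smul₀ hγ₀.ne']
  have hf0 : f 0 ≠ ⊤ := (hf.neg_at_zero.trans_le le_top).ne
  have hB : (f 0).toReal < 0 := EReal.toReal_neg hf.neg_at_zero (hf.proper 0)
  have hline : Tendsto (fun γ => γ₀ * (f a).toReal + (γ - γ₀) * (f 0).toReal) atTop atBot :=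
    tendsto_atBot_add_const_left _ _
      ((tendsto_atTop_add_const_right _ (-γ₀) tendsto_id).atTop_mul_const_of_neg hB)
  obtain ⟨γ, hγ, hγz⟩ := ((eventually_ge_atTop γ₀).and (tendsto_atBot.mp hline z)).exists
  refine ⟨γ, hγ₀.trans_le hγ, ?_⟩
  rw [hx]
  refine (perspective_smul_le_of_convex hf.convexEpi (EReal.le_coe_toReal hdom)
    (EReal.le_coe_toReal hf0) hγ₀ hγ).trans ?_
  exact_mod_cast hγz

lemma radial_nonneg (z : ℝ) (x : EuclideanSpace ℝ (Fin n)) : 0 ≤ radial f z x :=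
  Real.sInf_nonneg fun _ hγ => hγ.1.le

lemma radial_smul_le_s7 {z r : ℝ} {y : EuclideanSpace ℝ (Fin n)} (hy : f y = r) (hz : z < 0)
    (hr : r < 0) : radial f z ((z / r) • y) ≤ z / r := by
  have hγ : 0 < z / r := div_pos_of_neg_of_neg hz hr
  refine csInf_le ⟨0, fun _ hγ' => hγ'.1.le⟩ ⟨hγ, ?_⟩
  rw [perspective_smul_self y hγ, hy, ← EReal.coe_mul, div_mul_cancel₀ z hr.ne]

lemma le_radial_of_le_iInf (hf : GoodFun f) {z b : ℝ} (hz : z < 0)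
    (hb : ((z / b : ℝ) : EReal) ≤ ⨅ y, f y) (x : EuclideanSpace ℝ (Fin n)) :
    b ≤ radial f z x := by
  obtain ⟨γ₁, hγ₁⟩ := hf.exists_perspective_le z x
  refine le_csInf ⟨γ₁, hγ₁⟩ fun γ ⟨hγ, hper⟩ => ?_
  have : ((γ * (z / b) : ℝ) : EReal) ≤ z := calc
    ((γ * (z / b) : ℝ) : EReal) ≤ γ * f (γ⁻¹ • x) := by
      rw [EReal.coe_mul]
      exact mul_le_mul_of_nonneg_left (hb.trans (iInf_le f _)) (EReal.coe_nonneg.mpr hγ.le)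
    _ ≤ z := hper
  rcases le_or_gt b 0 with hb₀ | hb₀
  · exact hb₀.trans hγ.le
  · rw [EReal.coe_le_coe_iff, mul_div_assoc', div_le_iff₀ hb₀] at this
    nlinarith

lemma mem_lowerBounds_range_radial_iff (hf : GoodFun f) {z b : ℝ} (hz : z < 0) :
    b ∈ lowerBounds (range (radial f z)) ↔ b ≤ 0 ∨ ((z / b : ℝ) : EReal) ≤ ⨅ y, f y := by
  rw [mem_lowerBounds, forall_mem_range]
  refine ⟨fun h => or_iff_not_imp_left.mpr fun hb => le_iInf fun y => ?_, ?_⟩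
  · rw [not_le] at hb
    rcases lt_or_ge (f y) 0 with hy | hy
    · obtain ⟨r, hr⟩ : ∃ r : ℝ, f y = r :=
        ⟨_, (EReal.coe_toReal (ne_top_of_lt hy) (hf.proper y)).symm⟩
      have hr₀ : r < 0 := EReal.coe_neg'.mp (hr ▸ hy)
      have hbr := (h _).trans (radial_smul_le_s7 hr hz hr₀)
      rw [le_div_iff_of_neg hr₀] at hbr
      rw [hr, EReal.coe_le_coe_iff, div_le_iff₀ hb]
      linarith
    · exact (EReal.coe_nonpos.mpr (div_neg_of_neg_of_pos hz hb).le).trans hy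
  · rintro (hb | hb) x
    · exact hb.trans (radial_nonneg z x)
    · exact le_radial_of_le_iInf hf hz hb x

end Radial

theorem EReal.le_toReal_div_iff {z b : ℝ} {F : EReal} (hz : z < 0) (hF : F < 0) :
    b ≤ ((z : EReal) / F).toReal ↔ b ≤ 0 ∨ ((z / b : ℝ) : EReal) ≤ F := by
  induction F using EReal.rec with
  | bot => simp
  | coe r =>
    have hr : r < 0 := by exact_mod_cast hF
    rw [← EReal.coe_div, EReal.toReal_coe, EReal.coe_le_coe_iff]
    rcases le_or_gt b 0 with hb | hb
    · simp only [hb, true_or, iff_true]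
      exact hb.trans (div_pos_of_neg_of_neg hz hr).le
    · rw [le_div_iff_of_neg hr, div_le_iff₀ hb]
      simp only [not_le.mpr hb, false_or]
      rw [mul_comm]
  | top => exact absurd hF (by simp)

/-- **Proposition 2.3 (first part).** For any `z < 0`, the infimum of `γ_z` over `ℝⁿ`
equals `z/f*` where `f* = inf f` (with the convention `z/f* = 0` when `f* = -∞`;
in `EReal`, `(z : EReal) / ⊥ = 0`, so `((z : EReal) / f*).toReal` realizes this
convention). -/
theorem radial_infimum_eq {n : ℕ}
    (f : EuclideanSpace ℝ (Fin n) → EReal) (hf : GoodFun f)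
    (z : ℝ) (hz : z < 0) :
    IsGLB (Set.range (radial f z)) (((z : ℝ) / (⨅ y, f y) : EReal).toReal) := by
  have hF : ⨅ y, f y < 0 := (iInf_le f 0).trans_lt hf.neg_at_zero
  refine isGLB_iff_le_iff.mpr fun b => ?_
  rw [mem_lowerBounds_range_radial_iff hf hz, EReal.le_toReal_div_iff hz hF]
end

section
/- For any z < 0 and any x ∈ ℝⁿ with γ_z(x) > 0, the subdifferential of the radial reformulation satisfies ∂γ_z(x) = { (γ_z(x)/(⟨ζ, x⟩ + δ·z))·ζ | (ζ, δ) ∈ N_{epi f}(x/γ_z(x), z/γ_z(x)), (ζ, δ) ≠ (0, 0) }, where N_{epi f}(p) = { v ∈ ℝⁿ × ℝ | ⟨v, q − p⟩ ≤ 0 for all q ∈ epi f } is the normal cone to the epigraph of f at p. -/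
/-!
The radial reformulation is a gauge: `γ_z(y) = gauge (epi f) (y, z)`, and `C = epi f` is closed,
convex and a neighbourhood of the origin (a convex function is continuous inside its domain).

If `g` is a subgradient at `x` and `γ = γ_z(x)`, put `δ = (γ - ⟨g, x⟩) / z` and
`ℓ(u, s) = ⟨g, u⟩ + δ s`, so that `ℓ(x, z) = γ`. A point `q ∈ C` of negative height, rescaled
to height `z`, gives `γ_z(t q₁) ≤ t`, and the subgradient inequality turns this into
`ℓ q ≤ 1 = ℓ p` for `p = (x, z) / γ ∈ C`. So `p` is a local, hence (convexity) global, maximum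
of `ℓ` on `C`: `(g, δ)` is normal to `C` at `p`.

Conversely, for a nonzero normal `v` at `p`, `M = ⟨v, p⟩ = sup_C ⟨v, ·⟩` is positive because
`C` is a neighbourhood of `0`, and `⟨v, ·⟩ ≤ M · gauge C` is exactly the subgradient inequality
for `(γ / ⟨v, (x, z)⟩) • v.1`.
-/

open Filter

/-- The epigraph of `f` as a subset of `ℝⁿ × ℝ`. -/
def epigraph {n : ℕ} (f : EuclideanSpace ℝ (Fin n) → EReal) :
    Set (EuclideanSpace ℝ (Fin n) × ℝ) :=
  {p | f p.1 ≤ ((p.2 : ℝ) : EReal)}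

/-- The normal cone to a set `S ⊆ ℝⁿ × ℝ` at a point `p`:
`N_S(p) = { v | ⟨v, q - p⟩ ≤ 0 for all q ∈ S }`, with the inner product on `ℝⁿ × ℝ`
given by `⟨(ζ,δ), (u,s)⟩ = ⟨ζ, u⟩ + δ·s`. -/
def normalCone {n : ℕ} (S : Set (EuclideanSpace ℝ (Fin n) × ℝ))
    (p : EuclideanSpace ℝ (Fin n) × ℝ) : Set (EuclideanSpace ℝ (Fin n) × ℝ) :=
  {v | ∀ q ∈ S, (inner ℝ v.1 (q.1 - p.1) : ℝ) + v.2 * (q.2 - p.2) ≤ 0}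


open Topology Set
open scoped Pointwise

section Gauge

variable {V : Type*} [AddCommGroup V] [Module ℝ V] {s : Set V}

theorem le_mul_gauge_of_forall_le {ℓ : V →ₗ[ℝ] ℝ} {M : ℝ} (hs : Absorbent ℝ s) (hM : 0 < M)
    (hℓ : ∀ q ∈ s, ℓ q ≤ M) (x : V) : ℓ x ≤ M * gauge s x := by
  rw [← div_le_iff₀' hM]
  refine le_of_forall_gt_imp_ge_of_dense fun a ha => ?_
  obtain ⟨b, hb, hba, q, hq, rfl⟩ := exists_lt_of_gauge_lt hs ha
  rw [div_le_iff₀' hM, map_smul, smul_eq_mul]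
  calc b * ℓ q ≤ b * M := mul_le_mul_of_nonneg_left (hℓ q hq) hb.le
    _ ≤ M * a := by nlinarith

variable [TopologicalSpace V] [ContinuousSMul ℝ V]

theorem IsMaxOn.apply_pos_of_mem_nhds_zero {ℓ : V →ₗ[ℝ] ℝ} {p w : V} (hs : s ∈ 𝓝 0)
    (hmax : IsMaxOn ℓ s p) (hw : 0 < ℓ w) : 0 < ℓ p := by
  have hsmul : Tendsto (fun t : ℝ => t • w) (𝓝[>] 0) (𝓝 0) :=
    ((continuous_id.smul continuous_const).tendsto' 0 0 (zero_smul ℝ w)).mono_left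
      nhdsWithin_le_nhds
  obtain ⟨t, hts, ht⟩ := ((hsmul.eventually hs).and self_mem_nhdsWithin).exists
  calc 0 < t * ℓ w := mul_pos ht hw
    _ = ℓ (t • w) := by rw [map_smul, smul_eq_mul]
    _ ≤ ℓ p := hmax hts

theorem inv_gauge_smul_mem [IsTopologicalAddGroup V] (hc : Convex ℝ s) (hs₀ : s ∈ 𝓝 0)
    (hcl : IsClosed s) {x : V} (hx : 0 < gauge s x) : (gauge s x)⁻¹ • x ∈ s := by
  have h : gauge s ((gauge s x)⁻¹ • x) ≤ 1 := by
    rw [gauge_smul_of_nonneg (inv_nonneg.2 hx.le), smul_eq_mul, inv_mul_cancel₀ hx.ne']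
  simpa only [hcl.closure_eq] using (gauge_le_one_iff_mem_closure hc hs₀).1 h

end Gauge

section Pairing

variable {E : Type*} [NormedAddCommGroup E] [InnerProductSpace ℝ E]

noncomputable def prodPairing (v : E × ℝ) : E × ℝ →ₗ[ℝ] ℝ :=
  (innerₛₗ ℝ v.1).comp (LinearMap.fst ℝ E ℝ) + v.2 • LinearMap.snd ℝ E ℝ

@[simp]
theorem prodPairing_apply (v q : E × ℝ) : prodPairing v q = inner ℝ v.1 q.1 + v.2 * q.2 := rfl

theorem prodPairing_self_pos {v : E × ℝ} (hv : v ≠ 0) : 0 < prodPairing v v := by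
  rw [prodPairing_apply, real_inner_self_eq_norm_sq]
  rcases eq_or_ne v.1 0 with h1 | h1
  · have h2 : v.2 ≠ 0 := fun h2 => hv (Prod.ext h1 h2)
    rw [h1, norm_zero]
    nlinarith [mul_self_pos.2 h2]
  · have := norm_pos_iff.2 h1
    nlinarith [mul_self_nonneg v.2]

end Pairing

section Radial

variable {n : ℕ} {f : EuclideanSpace ℝ (Fin n) → EReal}

theorem mem_normalCone_iff_isMaxOn {S : Set (EuclideanSpace ℝ (Fin n) × ℝ)}
    {p v : EuclideanSpace ℝ (Fin n) × ℝ} : v ∈ normalCone S p ↔ IsMaxOn (prodPairing v) S p := by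
  refine forall₂_congr fun q _ => ?_
  rw [inner_sub_right, Set.mem_ofPred_eq, prodPairing_apply, prodPairing_apply]
  constructor <;> intro h <;> linarith

theorem perspective_le_iff_s9 (x : EuclideanSpace ℝ (Fin n)) {t z : ℝ} (ht : 0 < t) :
    perspective f x t ≤ (z : EReal) ↔ f (t⁻¹ • x) ≤ ((t⁻¹ * z : ℝ) : EReal) := by
  have htE : (0 : EReal) < t := by exact_mod_cast ht
  unfold perspective
  induction f (t⁻¹ • x) using EReal.rec with
  | bot => simp [EReal.mul_bot_of_pos htE]
  | coe r => rw [← EReal.coe_mul, EReal.coe_le_coe_iff, EReal.coe_le_coe_iff, le_inv_mul_iff₀ ht]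
  | top => simp only [EReal.mul_top_of_pos htE, top_le_iff, EReal.coe_ne_top]

theorem radial_eq_gauge (f : EuclideanSpace ℝ (Fin n) → EReal) (z : ℝ)
    (y : EuclideanSpace ℝ (Fin n)) : radial f z y = gauge (epigraph f) (y, z) := by
  unfold radial gauge
  congr 1
  ext t
  refine and_congr_right fun ht => ?_
  rw [perspective_le_iff_s9 y ht, mem_smul_set_iff_inv_smul_mem₀ ht.ne']
  rfl

theorem isClosed_epigraph (hf : LowerSemicontinuous f) : IsClosed (epigraph f) :=
  hf.isClosed_epigraph.preimage (continuous_id.prodMap continuous_coe_real_ereal)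

theorem GoodFun.convexOn_toReal (hf : GoodFun f) :
    ConvexOn ℝ {x | f x ≠ ⊤} fun x => (f x).toReal := by
  have hcombo : ∀ u ∈ {x | f x ≠ ⊤}, ∀ v ∈ {x | f x ≠ ⊤}, ∀ a b : ℝ, 0 ≤ a → 0 ≤ b →
      a + b = 1 → f (a • u + b • v) ≤ ((a * (f u).toReal + b * (f v).toReal : ℝ) : EReal) := by
    intro u hu v hv a b ha hb hab
    have hu' : f u ≤ ((f u).toReal : EReal) := (EReal.coe_toReal hu (hf.proper u)).ge
    have hv' : f v ≤ ((f v).toReal : EReal) := (EReal.coe_toReal hv (hf.proper v)).ge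
    simpa using hf.convexEpi (x := (u, (f u).toReal)) (y := (v, (f v).toReal)) hu' hv' ha hb hab
  refine ⟨fun u hu v hv a b ha hb hab => ?_, fun u hu v hv a b ha hb hab => ?_⟩
  · exact ne_top_of_le_ne_top (EReal.coe_ne_top _) (hcombo u hu v hv a b ha hb hab)
  · have h := EReal.toReal_le_toReal (hcombo u hu v hv a b ha hb hab) (hf.proper _)
      (EReal.coe_ne_top _)
    rwa [EReal.toReal_coe] at h

-- `f` is continuous at `0` (a convex function is continuous inside its domain), so
-- `f ≤ f(0)/2 < 0` near `0` and `epi f` contains a product neighbourhood of the origin.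
theorem GoodFun.epigraph_mem_nhds_zero (hf : GoodFun f) : epigraph f ∈ 𝓝 0 := by
  set F : EuclideanSpace ℝ (Fin n) → ℝ := fun x => (f x).toReal
  have hdom : {x | f x ≠ ⊤} ∈ 𝓝 (0 : EuclideanSpace ℝ (Fin n)) :=
    mem_interior_iff_mem_nhds.1 hf.zero_mem
  have hF0 : f 0 = (F 0 : EReal) :=
    (EReal.coe_toReal (hf.neg_at_zero.trans EReal.zero_lt_top).ne (hf.proper 0)).symm
  have hF0neg : F 0 < 0 := by exact_mod_cast hF0 ▸ hf.neg_at_zero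
  have hcont : ContinuousAt F 0 :=
    hf.convexOn_toReal.continuousOn_interior.continuousAt (interior_mem_nhds.2 hdom)
  have hsmall : ∀ᶠ w in 𝓝 0, f w ≤ ((F 0 / 2 : ℝ) : EReal) := by
    filter_upwards [hcont.eventually_lt_const (by linarith : F 0 < F 0 / 2), hdom] with w hw hwd
    rw [← EReal.coe_toReal hwd (hf.proper w)]
    exact_mod_cast hw.le
  refine mem_of_superset (prod_mem_nhds hsmall (Ioi_mem_nhds (by linarith : F 0 / 2 < 0))) ?_
  rintro ⟨w, s⟩ ⟨hw, hs⟩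
  exact (show f w ≤ _ from hw).trans (by exact_mod_cast (Set.mem_Ioi.1 hs).le)

end Radial

section Subgradient

variable {n : ℕ} {C : Set (EuclideanSpace ℝ (Fin n) × ℝ)} {x : EuclideanSpace ℝ (Fin n)} {z : ℝ}

theorem isMaxOn_prodPairing_of_isSubgradient {g : EuclideanSpace ℝ (Fin n)} (hC : Convex ℝ C)
    (hz : z < 0) (hγ : 0 < gauge C (x, z)) (hp : (gauge C (x, z))⁻¹ • (x, z) ∈ C)
    (hg : IsSubgradient (fun y => gauge C (y, z)) x g) :
    IsMaxOn (prodPairing (g, (gauge C (x, z) - inner ℝ g x) / z)) C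
      ((gauge C (x, z))⁻¹ • (x, z)) := by
  set γ := gauge C (x, z)
  set ℓ := prodPairing (g, (γ - inner ℝ g x) / z)
  have hz0 : z ≠ 0 := hz.ne
  have hℓp : ℓ (γ⁻¹ • (x, z)) = 1 := by
    rw [map_smul, smul_eq_mul, prodPairing_apply]
    field_simp
    ring
  -- Rescaling `q` to height `z` and applying the subgradient inequality there gives `ℓ q ≤ 1`.
  have hlow : ∀ q ∈ C, q.2 < 0 → ℓ q ≤ 1 := by
    intro q hq hq2
    set t := z / q.2
    have ht : 0 < t := div_pos_of_neg_of_neg hz hq2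
    have hmem : (t • q.1, z) ∈ t • C := by
      convert smul_mem_smul_set (a := t) hq using 1
      exact Prod.ext rfl (div_mul_cancel₀ z hq2.ne).symm
    have hsub := (hg (t • q.1)).trans (gauge_le_of_mem ht.le hmem)
    rw [inner_sub_right, real_inner_smul_right] at hsub
    have e : t * ℓ q = γ + (t * inner ℝ g q.1 - inner ℝ g x) := by
      have hq0 : q.2 ≠ 0 := hq2.ne
      simp only [ℓ, prodPairing_apply, t]
      field_simp
      ring
    exact le_of_mul_le_mul_left (by linarith) ht
  refine IsMaxOn.of_isLocalMaxOn_of_concaveOn hp ?_ (ℓ.concaveOn hC)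
  have hp2 : (γ⁻¹ • (x, z)).2 < 0 := by simpa using mul_neg_of_pos_of_neg (inv_pos.2 hγ) hz
  filter_upwards [nhdsWithin_le_nhds ((isOpen_lt continuous_snd continuous_const).mem_nhds hp2),
    self_mem_nhdsWithin] with q hq2 hq
  rw [hℓp]
  exact hlow q hq hq2

theorem isSubgradient_of_isMaxOn_prodPairing {v : EuclideanSpace ℝ (Fin n) × ℝ} (hC : C ∈ 𝓝 0)
    (hγ : 0 < gauge C (x, z)) (hv : v ≠ 0)
    (hmax : IsMaxOn (prodPairing v) C ((gauge C (x, z))⁻¹ • (x, z))) :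
    IsSubgradient (fun y => gauge C (y, z)) x
      ((gauge C (x, z) / prodPairing v (x, z)) • v.1) := by
  set γ := gauge C (x, z)
  set M := prodPairing v (γ⁻¹ • (x, z))
  have hM : 0 < M := hmax.apply_pos_of_mem_nhds_zero hC (prodPairing_self_pos hv)
  have hxz : prodPairing v (x, z) = γ * M := by
    rw [show M = γ⁻¹ * prodPairing v (x, z) from map_smul _ _ _, mul_inv_cancel_left₀ hγ.ne']
  intro y
  have hy := le_mul_gauge_of_forall_le (absorbent_nhds_zero hC) hM (fun q hq => hmax hq) (y, z)
  rw [hxz, div_mul_cancel_left₀ hγ.ne', real_inner_smul_left, inner_sub_right]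
  simp only [prodPairing_apply] at hxz hy
  calc γ + M⁻¹ * (inner ℝ v.1 y - inner ℝ v.1 x) = M⁻¹ * (inner ℝ v.1 y + v.2 * z) := by
        field_simp
        linarith
    _ ≤ M⁻¹ * (M * gauge C (y, z)) := by gcongr
    _ = gauge C (y, z) := inv_mul_cancel_left₀ hM.ne' _

end Subgradient

/-- **Proposition 2.4.** For any `z < 0` and any `x` with `γ_z(x) > 0`, the subgradients of
the radial reformulation are exactly
`∂γ_z(x) = { (γ_z(x)/(⟨ζ, x⟩ + δz))·ζ | (0,0) ≠ (ζ, δ) ∈ N_{epi f}(x/γ_z(x), z/γ_z(x)) }`. -/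
theorem radial_subdifferential {n : ℕ}
    (f : EuclideanSpace ℝ (Fin n) → EReal) (hf : GoodFun f)
    (z : ℝ) (hz : z < 0) (x : EuclideanSpace ℝ (Fin n))
    (hx : 0 < radial f z x) :
    {g : EuclideanSpace ℝ (Fin n) | IsSubgradient (radial f z) x g} =
      {g | ∃ v : EuclideanSpace ℝ (Fin n) × ℝ, v ≠ 0 ∧
        v ∈ normalCone (epigraph f) ((radial f z x)⁻¹ • x, z / radial f z x) ∧
        g = (radial f z x / ((inner ℝ v.1 x : ℝ) + v.2 * z)) • v.1} := by
  have hconv : Convex ℝ (epigraph f) := hf.convexEpi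
  have hC₀ := hf.epigraph_mem_nhds_zero
  have hp : (((radial f z x)⁻¹ • x, z / radial f z x) : EuclideanSpace ℝ (Fin n) × ℝ) =
      (radial f z x)⁻¹ • (x, z) := by
    simp [div_eq_inv_mul]
  rw [hp]
  simp only [funext (radial_eq_gauge f z)] at hx ⊢
  set γ := gauge (epigraph f) (x, z)
  ext g
  constructor
  · intro hg
    have key : inner ℝ g x + (γ - inner ℝ g x) / z * z = γ := by
      rw [div_mul_cancel₀ _ hz.ne]
      ring
    refine ⟨(g, (γ - inner ℝ g x) / z), fun h => ?_, ?_, ?_⟩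
    · obtain ⟨hg0, hδ0⟩ := Prod.mk_eq_zero.1 h
      rw [hδ0, hg0, inner_zero_left, zero_mul, add_zero] at key
      exact hx.ne key
    · exact mem_normalCone_iff_isMaxOn.2 <| isMaxOn_prodPairing_of_isSubgradient hconv hz hx
        (inv_gauge_smul_mem hconv hC₀ (isClosed_epigraph hf.lsc) hx) hg
    · rw [key, div_self hx.ne', one_smul]
  · rintro ⟨v, hv, hvN, rfl⟩
    exact isSubgradient_of_isMaxOn_prodPairing hC₀ hx hv (mem_normalCone_iff_isMaxOn.1 hvN)
end

section
/- At every iteration k ≥ 0 of the Radial Subgradient Method (assuming γ_{z_i}(x̃_{i+1}) > 0 for all i < k so that the iterate is defined), the ordering f* ≤ f(x_k) ≤ z_k < 0 holds. -/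
open Filter

lemma perspective_le_coe_iff {n : ℕ} (f : EuclideanSpace ℝ (Fin n) → EReal)
    (x : EuclideanSpace ℝ (Fin n)) {γ : ℝ} (hγ : 0 < γ) (z : ℝ) :
    perspective f x γ ≤ (z : EReal) ↔ f (γ⁻¹ • x) ≤ ((z / γ : ℝ) : EReal) := by
  rw [perspective, EReal.coe_div, EReal.le_div_iff_mul_le (by exact_mod_cast hγ)
    (EReal.coe_ne_top γ), mul_comm]

lemma perspective_radial_le {n : ℕ} {f : EuclideanSpace ℝ (Fin n) → EReal}
    (hf : LowerSemicontinuous f) {z : ℝ} {x : EuclideanSpace ℝ (Fin n)}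
    (hpos : 0 < radial f z x) :
    perspective f x (radial f z x) ≤ (z : EReal) := by
  set S := {γ : ℝ | 0 < γ ∧ perspective f x γ ≤ (z : EReal)}
  have hS : S.Nonempty := by
    by_contra hempty
    rw [Set.not_nonempty_iff_eq_empty] at hempty
    simp [radial, S, hempty] at hpos
  -- On `γ > 0`, membership in `S` says that `(γ⁻¹ • x, z / γ)` lies in the closed epigraph of `f`.
  set φ : ℝ → EuclideanSpace ℝ (Fin n) × EReal := fun γ => (γ⁻¹ • x, ((z / γ : ℝ) : EReal))
  have hφ : ContinuousAt φ (radial f z x) :=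
    ((continuousAt_id.inv₀ hpos.ne').smul continuousAt_const).prodMk
      (continuous_coe_real_ereal.continuousAt.comp
        (continuousAt_const.div continuousAt_id hpos.ne'))
  have hφS : φ '' S ⊆ {p | f p.1 ≤ p.2} := by
    rintro _ ⟨γ, ⟨hγ, hle⟩, rfl⟩
    exact (perspective_le_coe_iff f x hγ z).mp hle
  have hmem : φ (radial f z x) ∈ {p | f p.1 ≤ p.2} :=
    hf.isClosed_epigraph.closure_subset_iff.mpr hφS
      (mem_closure_image hφ (csInf_mem_closure hS ⟨0, fun _ hγ => hγ.1.le⟩))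
  exact (perspective_le_coe_iff f x hpos z).mpr hmem

/-- **Lemma 3.2.** At every iteration `k ≥ 0` of the Radial Subgradient Method (with the
first `k` iterations well-defined), the ordering `f* ≤ f(x_k) ≤ z_k < 0` holds. -/
theorem iterate_value_ordering {n : ℕ}
    (f : EuclideanSpace ℝ (Fin n) → EReal) (hf : GoodFun f)
    (α : ℕ → ℝ) (x xt : ℕ → EuclideanSpace ℝ (Fin n)) (z : ℕ → ℝ)
    (ζ : ℕ → EuclideanSpace ℝ (Fin n)) (hrsm : RSM f α x xt z ζ)
    (k : ℕ) (hpos : ∀ i < k, 0 < radial f (z i) (xt (i + 1))) :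
    (⨅ y, f y) ≤ f (x k) ∧ f (x k) ≤ ((z k : ℝ) : EReal) ∧ z k < 0 := by
  refine ⟨iInf_le _ _, ?_⟩
  induction k with
  | zero =>
    rw [hrsm.init_x, hrsm.init_z]
    exact ⟨le_rfl, by exact_mod_cast hrsm.init_z ▸ hf.neg_at_zero⟩
  | succ k ih =>
    obtain ⟨-, hzk⟩ := ih fun i hi => hpos i (Nat.lt_succ_of_lt hi)
    have hγ := hpos k (Nat.lt_succ_self k)
    rw [hrsm.update_x k hγ, hrsm.update_z k hγ]
    exact ⟨(perspective_le_coe_iff f _ hγ _).mp (perspective_radial_le hf.lsc hγ),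
      div_neg_of_neg_of_pos hzk hγ⟩
end

section
/- For any z < 0 and any y ∈ ℝⁿ with f(y) < 0, the radial reformulation satisfies γ_z((z/f(y))·y) = z/f(y). -/
open Filter

theorem EReal.le_of_coe_mul_le_coe_mul {γ b : ℝ} (hγ : 0 < γ) {a : EReal}
    (h : (γ : EReal) * a ≤ ((γ * b : ℝ) : EReal)) : a ≤ b := by
  have hb : ((γ * b : ℝ) : EReal) / γ = b := by
    rw [← EReal.coe_div, mul_div_cancel_left₀ b hγ.ne']
  rw [← hb, EReal.le_div_iff_mul_le (EReal.coe_pos.2 hγ) (EReal.coe_ne_top γ), mul_comm]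
  exact h

/-- Writing `y` as a convex combination of `s • y` and `0`, where `f` is negative. -/
theorem apply_lt_of_apply_smul_le {E : Type*} [AddCommGroup E] [Module ℝ E] {f : E → EReal}
    (hconv : Convex ℝ {p : E × ℝ | f p.1 ≤ (p.2 : EReal)}) (h0 : f 0 < 0)
    {y : E} {s r : ℝ} (hs : 1 < s) (hsy : f (s • y) ≤ ((s * r : ℝ) : EReal)) :
    f y < r := by
  obtain ⟨c, h0c, hc⟩ := EReal.lt_iff_exists_real_btwn.1 h0
  have hs0 : 0 < s := one_pos.trans hs
  have hw : 0 < 1 - s⁻¹ := sub_pos.2 (inv_lt_one_of_one_lt₀ hs)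
  have hmem := hconv (x := (s • y, s * r)) (y := ((0 : E), c)) hsy h0c.le
    (inv_nonneg.2 hs0.le) hw.le (add_sub_cancel _ _)
  have hcomb : s⁻¹ • (s • y, s * r) + (1 - s⁻¹) • ((0 : E), c) = (y, r + (1 - s⁻¹) * c) := by
    simp only [Prod.smul_mk, Prod.mk_add_mk, smul_smul, inv_mul_cancel₀ hs0.ne', one_smul,
      smul_zero, add_zero, smul_eq_mul, ← mul_assoc, one_mul]
  rw [hcomb] at hmem
  calc f y ≤ ((r + (1 - s⁻¹) * c : ℝ) : EReal) := hmem
    _ < r := EReal.coe_lt_coe_iff.2 (by linarith [mul_neg_of_pos_of_neg hw (EReal.coe_neg'.1 hc)])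

theorem perspective_smul {n : ℕ} (f : EuclideanSpace ℝ (Fin n) → EReal)
    (t γ : ℝ) (y : EuclideanSpace ℝ (Fin n)) :
    perspective f (t • y) γ = γ * f ((t / γ) • y) := by
  rw [perspective, smul_smul, div_eq_inv_mul]

/-- For any `z < 0` and any `y` with `f(y) < 0` (so `f(y)` is a finite real value `fy`),
the radial reformulation satisfies `γ_z((z/f(y))·y) = z/f(y)`. -/
theorem radial_at_scaled_point {n : ℕ}
    (f : EuclideanSpace ℝ (Fin n) → EReal) (hf : GoodFun f)
    (z : ℝ) (hz : z < 0) (y : EuclideanSpace ℝ (Fin n))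
    (fy : ℝ) (hfy : f y = ((fy : ℝ) : EReal)) (hfyneg : fy < 0) :
    radial f z ((z / fy) • y) = z / fy := by
  set t := z / fy with ht_def
  have ht : 0 < t := div_pos_of_neg_of_neg hz hfyneg
  refine IsLeast.csInf_eq ⟨⟨ht, ?_⟩, ?_⟩
  · rw [perspective_smul, div_self ht.ne', one_smul, hfy, ← EReal.coe_mul,
      div_mul_cancel₀ z hfyneg.ne]
  · rintro γ ⟨hγ, hle⟩
    by_contra! hlt
    have hs : 1 < t / γ := (one_lt_div hγ).2 hlt
    have hz_eq : γ * (t / γ * fy) = z := by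
      rw [← mul_assoc, mul_div_cancel₀ t hγ.ne', ht_def, div_mul_cancel₀ z hfyneg.ne]
    rw [perspective_smul, ← hz_eq] at hle
    have hsy := EReal.le_of_coe_mul_le_coe_mul hγ hle
    exact (apply_lt_of_apply_smul_le hf.convexEpi hf.neg_at_zero hs hsy).ne hfy
end
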